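/- arXiv:2512.17635 — 2 statements merged into one kernel-verified Lean document; each statement's English description precedes it below -/
import Mathlib

section
/- Pick-freeze covariance identity for closed Sobol' indices: let X = (X_u, X_{-u}) have independent components, let X' be an independent copy of X, set Y = f(X) and Y^u = f(X_u, X'_{-u}) for a square-integrable function f. Then Cov(Y, Y^u) = Var(E[f(X) | X_u]). -/
/-! Write `g a = ∫ f(a, ·) dμb`. Conditionally on `X_u = a` the variables `Y` and `Y^u` are
independent, each with mean `g a`, so `E[Y Y^u] = E[g(X_u)²]`; since `Y`, `Y^u` and `g(X_u)` all
have mean `E[f]`, the covariance of `Y` and `Y^u` is the variance of `g(X_u)`. -/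

open MeasureTheory ProbabilityTheory

section PickFreeze

variable {A B : Type*} [MeasurableSpace A] [MeasurableSpace B]
  {μa : Measure A} {μb : Measure B}

lemma memLp_two_integral_prod_right [SFinite μa] [IsProbabilityMeasure μb]
    {f : A × B → ℝ} (hf : MemLp f 2 (μa.prod μb)) :
    MemLp (fun a => ∫ b, f (a, b) ∂μb) 2 μa := by
  have hg : AEStronglyMeasurable (fun a => ∫ b, f (a, b) ∂μb) μa :=
    hf.1.integral_prod_right'
  rw [memLp_two_iff_integrable_sq hg]
  refine hf.integrable_sq.integral_prod_left.mono' (hg.pow 2) ?_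
  filter_upwards [hf.integrable_sq.prod_right_ae, hf.1.prodMk_left] with a hsq hmeas
  have hslice : MemLp (fun b => f (a, b)) 2 μb := (memLp_two_iff_integrable_sq hmeas).2 hsq
  rw [Real.norm_of_nonneg (sq_nonneg _)]
  -- Jensen: `(∫ X)² ≤ ∫ X²` because `Var X ≥ 0`
  simpa [variance_eq_sub hslice, sub_nonneg] using variance_nonneg (fun b => f (a, b)) μb

variable [IsProbabilityMeasure μa] [IsProbabilityMeasure μb]

lemma measurePreserving_pickFreeze :
    MeasurePreserving (fun ω : (A × B) × (A × B) => (ω.1.1, ω.2.2))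
      ((μa.prod μb).prod (μa.prod μb)) (μa.prod μb) :=
  measurePreserving_fst.prod measurePreserving_snd

lemma integral_mul_pickFreeze {F G : A × B → ℝ}
    (hF : MemLp F 2 (μa.prod μb)) (hG : MemLp G 2 (μa.prod μb)) :
    ∫ ω : (A × B) × (A × B), F ω.1 * G (ω.1.1, ω.2.2)
        ∂((μa.prod μb).prod (μa.prod μb))
      = ∫ a, (∫ b, F (a, b) ∂μb) * (∫ b, G (a, b) ∂μb) ∂μa := by
  set gG : A → ℝ := fun a => ∫ b, G (a, b) ∂μb
  have hFG : Integrable (fun ω : (A × B) × (A × B) => F ω.1 * G (ω.1.1, ω.2.2))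
      ((μa.prod μb).prod (μa.prod μb)) :=
    (hF.comp_measurePreserving measurePreserving_fst).integrable_mul
      (hG.comp_measurePreserving measurePreserving_pickFreeze)
  have hFgG : Integrable (fun x : A × B => F x * gG x.1) (μa.prod μb) :=
    hF.integrable_mul
      ((memLp_two_integral_prod_right hG).comp_measurePreserving measurePreserving_fst)
  calc _ = ∫ x : A × B, ∫ y : A × B, F x * G (x.1, y.2) ∂(μa.prod μb) ∂(μa.prod μb) :=
        integral_prod _ hFG
    _ = ∫ x : A × B, F x * gG x.1 ∂(μa.prod μb) := by
        congr with x
        rw [integral_const_mul, integral_fun_snd (fun b => G (x.1, b))]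
        simp [gG]
    _ = ∫ a, ∫ b, F (a, b) * gG a ∂μb ∂μa := integral_prod _ hFgG
    _ = ∫ a, (∫ b, F (a, b) ∂μb) * gG a ∂μa := by simp_rw [integral_mul_const]

lemma covariance_pickFreeze {F G : A × B → ℝ}
    (hF : MemLp F 2 (μa.prod μb)) (hG : MemLp G 2 (μa.prod μb)) :
    cov[fun ω : (A × B) × (A × B) => F ω.1, fun ω => G (ω.1.1, ω.2.2);
        (μa.prod μb).prod (μa.prod μb)]
      = cov[fun a => ∫ b, F (a, b) ∂μb, fun a => ∫ b, G (a, b) ∂μb; μa] := by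
  have hT := measurePreserving_pickFreeze (μa := μa) (μb := μb)
  have hmeanF : ∫ ω : (A × B) × (A × B), F ω.1 ∂((μa.prod μb).prod (μa.prod μb))
      = ∫ a, ∫ b, F (a, b) ∂μb ∂μa := by
    rw [integral_fun_fst, ← integral_prod _ (hF.integrable one_le_two)]
    simp
  have hmeanG :
      ∫ ω : (A × B) × (A × B), G (ω.1.1, ω.2.2) ∂((μa.prod μb).prod (μa.prod μb))
      = ∫ a, ∫ b, G (a, b) ∂μb ∂μa := by
    rw [← integral_map hT.aemeasurable (by rw [hT.map_eq]; exact hG.1), hT.map_eq,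
      integral_prod _ (hG.integrable one_le_two)]
  have hF₁ : MemLp (fun ω : (A × B) × (A × B) => F ω.1) 2
      ((μa.prod μb).prod (μa.prod μb)) :=
    hF.comp_measurePreserving measurePreserving_fst
  have hGT : MemLp (fun ω : (A × B) × (A × B) => G (ω.1.1, ω.2.2)) 2
      ((μa.prod μb).prod (μa.prod μb)) :=
    hG.comp_measurePreserving hT
  rw [covariance_eq_sub hF₁ hGT,
    covariance_eq_sub (memLp_two_integral_prod_right hF) (memLp_two_integral_prod_right hG)]
  simp only [Pi.mul_apply]
  rw [integral_mul_pickFreeze hF hG, hmeanF, hmeanG]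

end PickFreeze

/-- Pick-freeze covariance identity: `Cov(Y, Y^u) = Var(E[f(X)|X_u])`.
The input `X = (X_u, X_{-u})` with independent components is modeled as the identity
on the product space `A × B` with product probability measure; the independent copy
`X'` lives on a second factor, so `Y(ω) = f ω.1` and `Y^u(ω) = f (ω.1.1, ω.2.2)`. -/
theorem pick_freeze_covariance_identity {A B : Type*}
    [MeasurableSpace A] [MeasurableSpace B]
    (μa : Measure A) (μb : Measure B)
    [IsProbabilityMeasure μa] [IsProbabilityMeasure μb]
    (f : A × B → ℝ) (hf : MemLp f 2 (μa.prod μb)) :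
    (∫ ω : (A × B) × (A × B),
        (f ω.1 - ∫ ω' : (A × B) × (A × B), f ω'.1 ∂((μa.prod μb).prod (μa.prod μb))) *
        (f (ω.1.1, ω.2.2) -
          ∫ ω' : (A × B) × (A × B), f (ω'.1.1, ω'.2.2) ∂((μa.prod μb).prod (μa.prod μb)))
        ∂((μa.prod μb).prod (μa.prod μb)))
      = variance (fun a : A => ∫ b, f (a, b) ∂μb) μa := by
  change cov[fun ω : (A × B) × (A × B) => f ω.1, fun ω => f (ω.1.1, ω.2.2);
    (μa.prod μb).prod (μa.prod μb)] = _
  rw [covariance_pickFreeze hf hf,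
    covariance_self (memLp_two_integral_prod_right hf).1.aemeasurable]
end

section
/- Basis-derived sensitivity map formula: with pick-freeze coefficient samples a_k, b_k ∈ ℝ^p and basis matrix V ∈ ℝ^{p×L}, define the scalar output samples at dimension ℓ by y_k^{(ℓ)} = Σ_q a_{k,q} V_{q,ℓ} and y*_k^{(ℓ)} = Σ_q b_{k,q} V_{q,ℓ}. Then the scalar pick-freeze numerator (1/m) Σ_k y_k^{(ℓ)} y*_k^{(ℓ)} − ((1/(2m)) Σ_k (y_k^{(ℓ)}+y*_k^{(ℓ)}))² equals v_ℓᵀ M v_ℓ, where v_ℓ is the ℓ-th column of V and M = (1/(2m)) Σ_k (a_k b_kᵀ + b_k a_kᵀ) − f̂₀ f̂₀ᵀ, f̂₀ = (1/(2m)) Σ_k (a_k + b_k). -/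
open Matrix BigOperators Finset

/-! The quadratic form `w ↦ wᵀ M w` is linear in `M` and sends the rank-one matrix `u vᵀ` to
`(u ⬝ w) (v ⬝ w)`. At `w = v_ℓ` the projections `a_k ⬝ w`, `b_k ⬝ w` are exactly the scalar samples
`y_k`, `y*_k`, so the matrix estimator evaluates to the scalar pick-freeze estimator. -/

namespace Matrix

variable {ι n R : Type*} [Fintype ι] [Fintype n] [CommRing R]

theorem dotProduct_vecMulVec_mulVec (u v w : n → R) :
    w ⬝ᵥ (vecMulVec u v *ᵥ w) = (u ⬝ᵥ w) * (v ⬝ᵥ w) := by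
  rw [vecMulVec_mulVec, op_smul_eq_smul, dotProduct_smul, smul_eq_mul, dotProduct_comm w u, mul_comm]

theorem dotProduct_symmetrized_sum_vecMulVec_sub_mulVec (c : R) (a b : ι → n → R)
    (f w : n → R) :
    w ⬝ᵥ ((c • ∑ k, (vecMulVec (a k) (b k) + vecMulVec (b k) (a k)) - vecMulVec f f) *ᵥ w)
      = 2 * c * ∑ k, (a k ⬝ᵥ w) * (b k ⬝ᵥ w) - (f ⬝ᵥ w) ^ 2 := by
  simp only [sub_mulVec, smul_mulVec, sum_mulVec, add_mulVec, dotProduct_sub, dotProduct_smul,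
    dotProduct_sum, dotProduct_add, dotProduct_vecMulVec_mulVec, smul_eq_mul]
  have hsymm : ∑ k, ((a k ⬝ᵥ w) * (b k ⬝ᵥ w) + (b k ⬝ᵥ w) * (a k ⬝ᵥ w))
      = 2 * ∑ k, (a k ⬝ᵥ w) * (b k ⬝ᵥ w) := by
    rw [mul_sum]
    exact sum_congr rfl fun k _ => by ring
  rw [hsymm]
  ring

end Matrix

theorem basis_derived_sensitivity_map (p L m : ℕ)
    (a b : Fin m → (Fin p → ℝ)) (V : Matrix (Fin p) (Fin L) ℝ)
    (y ystar : Fin m → Fin L → ℝ)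
    (hy : ∀ k ℓ, y k ℓ = ∑ q : Fin p, a k q * V q ℓ)
    (hystar : ∀ k ℓ, ystar k ℓ = ∑ q : Fin p, b k q * V q ℓ)
    (f0 : Fin p → ℝ) (hf0 : f0 = (1 / (2 * (m : ℝ))) • ∑ k : Fin m, (a k + b k))
    (M : Matrix (Fin p) (Fin p) ℝ)
    (hM : M = (1 / (2 * (m : ℝ))) •
        (∑ k : Fin m, (vecMulVec (a k) (b k) + vecMulVec (b k) (a k)))
      - vecMulVec f0 f0) :
    ∀ ℓ : Fin L,
      (1 / (m : ℝ)) * ∑ k : Fin m, y k ℓ * ystar k ℓ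
        - ((1 / (2 * (m : ℝ))) * ∑ k : Fin m, (y k ℓ + ystar k ℓ)) ^ 2
      = (fun q => V q ℓ) ⬝ᵥ (M *ᵥ fun q => V q ℓ) := by
  intro ℓ
  set v : Fin p → ℝ := fun q => V q ℓ
  have hyv : ∀ k, y k ℓ = a k ⬝ᵥ v := fun k => hy k ℓ
  have hystarv : ∀ k, ystar k ℓ = b k ⬝ᵥ v := fun k => hystar k ℓ
  have hf0v : f0 ⬝ᵥ v = 1 / (2 * (m : ℝ)) * ∑ k, (y k ℓ + ystar k ℓ) := by
    simp only [hf0, smul_dotProduct, sum_dotProduct, add_dotProduct, hyv, hystarv, smul_eq_mul]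
  rw [hM, dotProduct_symmetrized_sum_vecMulVec_sub_mulVec, hf0v]
  simp only [hyv, hystarv]
  -- `1 / m = 2 * (1 / (2 * m))` holds in `ℝ` also for `m = 0`, so no case split is needed.
  ring
end
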